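/- Let G be a finite group and n a positive integer. The number of aperiodic identity-product n-necklaces, i.e., |Pₙ|/n where Pₙ is the set of identity-product n-tuples with smallest period n, equals (1/n) ∑_{d|n} μ(n/d) · [G ÷ (n/d)] · |G|^{d-1}. -/

import Mathlib

open Fin.NatCast

/-!
A tuple fixed by the rotation by `d ∣ n` is the `n / d`-fold repetition of its first `d`
entries, so it has product `1` iff the product `g` of those entries satisfies `g ^ (n / d) = 1`.
The first `d - 1` entries are free and then `g` determines the last one, which gives
`[G ÷ (n / d)] ⬝ |G| ^ (d - 1)` such tuples. Sorting the `d`-periodic tuples by their minimal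
period `e ∣ d` and applying Möbius inversion counts those of minimal period `n`.
-/

open Function Finset ArithmeticFunction
open scoped ArithmeticFunction.Moebius

namespace Function

variable {α : Type*} {f : α → α}

theorem IsPeriodicPt.minimalPeriod_eq_iff {x : α} {n : ℕ} (h : IsPeriodicPt f n x) (hn : 0 < n) :
    minimalPeriod f x = n ↔ ∀ j, 0 < j → j < n → ¬IsPeriodicPt f j x := by
  refine ⟨fun hx j hj hjn ↦ not_isPeriodicPt_of_pos_of_lt_minimalPeriod hj.ne' (hx ▸ hjn),
    fun hx ↦ (h.minimalPeriod_le hn).antisymm (not_lt.1 fun hlt ↦ ?_)⟩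
  exact hx _ (h.minimalPeriod_pos hn) hlt (isPeriodicPt_minimalPeriod f x)

variable [Finite α] (f) (p : α → Prop)

theorem sum_card_minimalPeriod_eq_card_isPeriodicPt {d : ℕ} (hd : 0 < d) :
    ∑ e ∈ d.divisors, Nat.card {x // p x ∧ minimalPeriod f x = e} =
      Nat.card {x // p x ∧ IsPeriodicPt f d x} := by
  classical
  have := Fintype.ofFinite α
  simp only [Nat.card_eq_fintype_card, Fintype.card_subtype]
  rw [card_eq_sum_card_fiberwise (f := minimalPeriod f) (t := d.divisors) fun x hx ↦
    Nat.mem_divisors.2 ⟨isPeriodicPt_iff_minimalPeriod_dvd.1 (mem_filter.1 hx).2.2, hd.ne'⟩]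
  refine sum_congr rfl fun e he ↦ ?_
  rw [filter_filter]
  refine congrArg card (filter_congr fun x _ ↦ ⟨?_, ?_⟩)
  · rintro ⟨hx, rfl⟩
    exact ⟨⟨hx, isPeriodicPt_iff_minimalPeriod_dvd.2 (Nat.dvd_of_mem_divisors he)⟩, rfl⟩
  · rintro ⟨⟨hx, -⟩, rfl⟩
    exact ⟨hx, rfl⟩

theorem card_minimalPeriod_eq_sum_moebius {n : ℕ} (hn : 0 < n) :
    (Nat.card {x // p x ∧ minimalPeriod f x = n} : ℤ) =
      ∑ d ∈ n.divisors, μ (n / d) * Nat.card {x // p x ∧ IsPeriodicPt f d x} := by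
  have := (sum_eq_iff_sum_mul_moebius_eq
    (f := fun e ↦ (Nat.card {x // p x ∧ minimalPeriod f x = e} : ℤ))
    (g := fun d ↦ (Nat.card {x // p x ∧ IsPeriodicPt f d x} : ℤ))).1
    (fun d hd ↦ by exact_mod_cast sum_card_minimalPeriod_eq_card_isPeriodicPt f p hd) n hn
  rw [← this, ← Nat.sum_divisorsAntidiagonal' fun u v ↦
    μ u * (Nat.card {x // p x ∧ IsPeriodicPt f v x} : ℤ)]
  simp only [Int.cast_id]

end Function

section Rotation

variable {M α : Type*}

def rotateTuple [Add M] [One M] (a : M → α) : M → α := fun i ↦ a (i + 1)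

theorem iterate_rotateTuple [AddMonoidWithOne M] (a : M → α) (j : ℕ) :
    rotateTuple^[j] a = fun i ↦ a (i + j) := by
  induction j generalizing a with
  | zero => simp
  | succ j ih => simp [iterate_succ_apply, ih, rotateTuple, add_assoc]

theorem isPeriodicPt_rotateTuple_iff [AddMonoidWithOne M] {a : M → α} {j : ℕ} :
    IsPeriodicPt rotateTuple j a ↔ ∀ i, a (i + j) = a i := by
  rw [IsPeriodicPt, IsFixedPt, iterate_rotateTuple, funext_iff]

theorem minimalPeriod_rotateTuple_eq_iff {n : ℕ} [NeZero n] (a : Fin n → α) :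
    minimalPeriod rotateTuple a = n ↔ ∀ j : ℕ, 0 < j → j < n → ¬∀ i : Fin n, a (i + j) = a i := by
  have hn : IsPeriodicPt rotateTuple n a := isPeriodicPt_rotateTuple_iff.2 fun i ↦ by simp
  simpa only [isPeriodicPt_rotateTuple_iff] using hn.minimalPeriod_eq_iff (NeZero.pos n)

end Rotation

section PeriodicExtension

variable {α : Type*} {d n : ℕ} [NeZero d]

-- The cast `ℕ → Fin d` reduces mod `d`, so the `i`-th entry is `b (i mod d)`.
def periodicExtension (b : Fin d → α) (n : ℕ) : Fin n → α := fun i ↦ b (i : ℕ)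

theorem isPeriodicPt_periodicExtension [NeZero n] (hdn : d ∣ n) (b : Fin d → α) :
    IsPeriodicPt rotateTuple d (periodicExtension b n) := by
  refine isPeriodicPt_rotateTuple_iff.2 fun i ↦ congrArg b (Fin.ext ?_)
  simp [Fin.val_add, Nat.mod_mod_of_dvd _ hdn]

theorem periodicExtension_restrict [NeZero n] {a : Fin n → α}
    (ha : IsPeriodicPt rotateTuple d a) : periodicExtension (fun j : Fin d ↦ a (j : ℕ)) n = a := by
  funext i
  have := isPeriodicPt_rotateTuple_iff.1 (ha.const_mul (i / d)) ((i % d : ℕ) : Fin n)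
  rw [← Nat.cast_add, Nat.mod_add_div', Fin.cast_val_eq_self] at this
  simp only [periodicExtension, Fin.val_natCast, this]

theorem prod_ofFn_periodicExtension {M : Type*} [Monoid M] (hdn : d ∣ n) (b : Fin d → M) :
    (List.ofFn (periodicExtension b n)).prod = (List.ofFn b).prod ^ (n / d) := by
  obtain ⟨m, rfl⟩ := hdn
  have hcast (i : ℕ) (j : Fin d) : ((d * i + j : ℕ) : Fin d) = j := by
    simp [Fin.ext_iff, Fin.val_natCast]
  simp only [List.ofFn_mul', periodicExtension, hcast, List.ofFn_const, List.prod_flatten,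
    List.map_replicate, List.prod_replicate, Nat.mul_div_cancel_left _ (NeZero.pos d)]

def periodicTupleEquiv [NeZero n] (hdn : d ∣ n) :
    {a : Fin n → α // IsPeriodicPt rotateTuple d a} ≃ (Fin d → α) where
  toFun a j := a.1 (j : ℕ)
  invFun b := ⟨periodicExtension b n, isPeriodicPt_periodicExtension hdn b⟩
  left_inv a := Subtype.ext (periodicExtension_restrict a.2)
  right_inv b := funext fun j ↦ congrArg b <| Fin.ext <| by
    simp [Fin.val_natCast,
      Nat.mod_eq_of_lt (j.2.trans_le (Nat.le_of_dvd (NeZero.pos n) hdn))]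

end PeriodicExtension

section ProductCount

variable (G : Type*) [Group G]

def prodTailEquiv (k : ℕ) : (Fin (k + 1) → G) ≃ G × (Fin k → G) where
  toFun b := ((List.ofFn b).prod, Fin.tail b)
  invFun c := Fin.cons (c.1 * (List.ofFn c.2).prod⁻¹) c.2
  left_inv b := by simpa [List.ofFn_succ, Fin.tail_def] using Fin.cons_self_tail b
  right_inv c := by simp [List.ofFn_succ]

theorem card_subtype_prod_ofFn (P : G → Prop) (k : ℕ) :
    Nat.card {b : Fin (k + 1) → G // P (List.ofFn b).prod} =
      Nat.card {g // P g} * Nat.card G ^ k := by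
  calc _ = Nat.card {c : G × (Fin k → G) // P c.1} :=
        Nat.card_congr ((prodTailEquiv G k).subtypeEquiv fun _ ↦ Iff.rfl)
    _ = Nat.card ({g // P g} × (Fin k → G)) :=
        Nat.card_congr Equiv.prodSubtypeFstEquivSubtypeProd
    _ = _ := by rw [Nat.card_prod, Nat.card_fun, Nat.card_fin]

theorem card_prod_eq_one_isPeriodicPt_rotateTuple {n d : ℕ} [NeZero n] (hdn : d ∣ n) :
    Nat.card {a : Fin n → G // (List.ofFn a).prod = 1 ∧ IsPeriodicPt rotateTuple d a} =
      Nat.card {g : G // g ^ (n / d) = 1} * Nat.card G ^ (d - 1) := by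
  have hd : d ≠ 0 := ne_zero_of_dvd_ne_zero (NeZero.ne n) hdn
  have : NeZero d := ⟨hd⟩
  obtain ⟨k, rfl⟩ := Nat.exists_eq_succ_of_ne_zero hd
  calc _ = Nat.card {a : {a : Fin n → G // IsPeriodicPt rotateTuple (k + 1) a} //
          (List.ofFn a.1).prod = 1} :=
        Nat.card_congr ((Equiv.subtypeEquivRight fun _ ↦ and_comm).trans
          (Equiv.subtypeSubtypeEquivSubtypeInter _ _).symm)
    _ = Nat.card {b : Fin (k + 1) → G // (List.ofFn b).prod ^ (n / (k + 1)) = 1} := by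
        refine Nat.card_congr ((periodicTupleEquiv hdn).subtypeEquiv fun a ↦ ?_)
        rw [← prod_ofFn_periodicExtension hdn]
        simp [periodicTupleEquiv, periodicExtension_restrict a.2]
    _ = _ := card_subtype_prod_ofFn G (· ^ (n / (k + 1)) = 1) k

end ProductCount

/-- The number `|Pₙ|` of aperiodic identity-product `n`-tuples (so that `|Pₙ|/n` is
the number of aperiodic identity-product `n`-necklaces) equals
`∑_{d ∣ n} μ(n/d) ⬝ [G ÷ (n/d)] ⬝ |G|^(d-1)`. -/
theorem card_aperiodic_identity_product_tuples (G : Type*) [Group G] [Fintype G]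
    (n : ℕ) [NeZero n] :
    (Nat.card {a : Fin n → G //
        (List.ofFn a).prod = 1 ∧
          ∀ j : ℕ, 0 < j → j < n → ¬ (∀ i : Fin n, a (i + (j : Fin n)) = a i)} : ℤ)
      = ∑ d ∈ n.divisors,
          ArithmeticFunction.moebius (n / d)
            * (Nat.card {g : G // g ^ (n / d) = 1} : ℤ)
            * (Fintype.card G : ℤ) ^ (d - 1) := by
  rw [← Nat.card_eq_fintype_card]
  calc _ = (Nat.card {a : Fin n → G //
          (List.ofFn a).prod = 1 ∧ minimalPeriod rotateTuple a = n} : ℤ) :=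
        congrArg _ (Nat.card_congr (Equiv.subtypeEquivRight fun a ↦
          and_congr_right' (minimalPeriod_rotateTuple_eq_iff a).symm))
    _ = _ := card_minimalPeriod_eq_sum_moebius _ _ (NeZero.pos n)
    _ = _ := by
        refine sum_congr rfl fun d hd ↦ ?_
        rw [card_prod_eq_one_isPeriodicPt_rotateTuple G (Nat.dvd_of_mem_divisors hd)]
        push_cast
        ring
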